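/- Let F be a finite field with q = |F| elements and K a finite field extension of F of degree m. Let n, t, r be natural numbers with t ≤ n and r ≤ min(m, n − t). For v ∈ K^n, write v₂ ∈ K^{n−t} for the vector of its last n − t coordinates, and let w(v) denote the F-dimension of the F-span of the coordinates of v. Then |{v ∈ K^n : w(v) = r and w(v₂) = r}| · ∏_{i=0}^{r−1} (q^r − q^i) = q^{r·t} · ∏_{i=0}^{r−1} (q^{n−t} − q^i)(q^m − q^i). -/

import Mathlib

open Module Submodule

private lemma nat_card_fiber_const {α β : Type*} [Finite α] [Finite β] (f : α → β) (c : ℕ)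
    (h : ∀ b, Nat.card {a // f a = b} = c) :
    Nat.card α = Nat.card β * c := by
  letI := Fintype.ofFinite β
  letI : ∀ b : β, Fintype {a // f a = b} := fun b => Fintype.ofFinite _
  have e : Nat.card α = Nat.card (Σ b, {a // f a = b}) :=
    (Nat.card_congr (Equiv.sigmaFiberEquiv f)).symm
  rw [e, Nat.card_eq_fintype_card, Fintype.card_sigma, Nat.card_eq_fintype_card]
  calc ∑ b : β, Fintype.card {a // f a = b} = ∑ _b : β, c :=
        Finset.sum_congr rfl fun b _ => by rw [← h b, Nat.card_eq_fintype_card]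
  _ = Fintype.card β * c := by rw [Finset.sum_const, Finset.card_univ, smul_eq_mul]

private lemma card_spanning (F : Type*) [Field F] [Fintype F] (ℓ r : ℕ) (h : r ≤ ℓ) :
    Nat.card {c : Fin ℓ → (Fin r → F) // Submodule.span F (Set.range c) = ⊤} =
      ∏ i ∈ Finset.range r, (Fintype.card F ^ ℓ - Fintype.card F ^ i) := by
  have key : ∀ c : Fin ℓ → (Fin r → F),
      Submodule.span F (Set.range c) = ⊤ ↔ LinearIndependent F (fun i j => c j i) := by
    intro c
    set M : Matrix (Fin r) (Fin ℓ) F := Matrix.of (fun i j => c j i) with hM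
    have h1 : Module.finrank F (Submodule.span F (Set.range c)) = M.rank := by
      rw [Matrix.rank_eq_finrank_span_cols]
      rfl
    have h2 : LinearIndependent F (fun i j => c j i) ↔ M.rank = r := by
      rw [linearIndependent_iff_card_eq_finrank_span, ← Matrix.rank_transpose M,
        Matrix.rank_eq_finrank_span_cols]
      simp only [Fintype.card_fin, Set.finrank]
      exact ⟨fun h => h.symm, fun h => h.symm⟩
    rw [h2]
    constructor
    · intro htop
      rw [← h1, htop, finrank_top, finrank_fintype_fun_eq_card, Fintype.card_fin]
    · intro hrk
      apply Submodule.eq_top_of_finrank_eq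
      rw [h1, hrk, finrank_fintype_fun_eq_card, Fintype.card_fin]
  have e : {c : Fin ℓ → (Fin r → F) // Submodule.span F (Set.range c) = ⊤} ≃
      {s : Fin r → (Fin ℓ → F) // LinearIndependent F s} :=
    Equiv.subtypeEquiv (Equiv.piComm fun _ _ => F) fun c => key c
  rw [Nat.card_congr e, card_linearIndependent (by simpa using h)]
  rw [finrank_fintype_fun_eq_card, Fintype.card_fin, Fin.prod_univ_eq_prod_range (fun i => Fintype.card F ^ ℓ - Fintype.card F ^ i)]

private lemma tail_count (F K : Type*) [Field F] [Fintype F] [Field K] [Fintype K] [Algebra F K]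
    (ℓ r : ℕ) (hrm : r ≤ Module.finrank F K) (hrl : r ≤ ℓ) :
    Nat.card {w : Fin ℓ → K // Module.finrank F (Submodule.span F (Set.range w)) = r} *
      ∏ i ∈ Finset.range r, (Fintype.card F ^ r - Fintype.card F ^ i) =
    (∏ i ∈ Finset.range r, (Fintype.card F ^ ℓ - Fintype.card F ^ i)) *
    ∏ i ∈ Finset.range r, (Fintype.card F ^ Module.finrank F K - Fintype.card F ^ i) := by
  classical
  have span_comb : ∀ (b : Fin r → K) (c : Fin ℓ → Fin r → F),
      Submodule.span F (Set.range c) = ⊤ →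
      Submodule.span F (Set.range fun j => ∑ i, c j i • b i) = Submodule.span F (Set.range b) := by
    intro b c hc
    have hcomp : (fun j => ∑ i, c j i • b i) = ⇑(Fintype.linearCombination F b) ∘ c := by
      funext j; simp [Fintype.linearCombination_apply]
    rw [hcomp, Set.range_comp, Submodule.span_image, hc, Submodule.map_top,
      Fintype.range_linearCombination]
  set P := ({b : Fin r → K // LinearIndependent F b} ×
    {c : Fin ℓ → (Fin r → F) // Submodule.span F (Set.range c) = ⊤}) with hP
  set T := {w : Fin ℓ → K // Module.finrank F (Submodule.span F (Set.range w)) = r} with hT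
  let Φ : P → T := fun p => ⟨fun j => ∑ i, p.2.1 j i • p.1.1 i, by
    rw [span_comb _ _ p.2.2, finrank_span_eq_card p.1.2, Fintype.card_fin]⟩
  have fib : ∀ w : T, Nat.card {p : P // Φ p = w} =
      ∏ i ∈ Finset.range r, (Fintype.card F ^ r - Fintype.card F ^ i) := by
    intro w
    set W := Submodule.span F (Set.range w.1) with hWdef
    have hW : Module.finrank F W = r := w.2
    let f : {p : P // Φ p = w} → {b' : Fin r → W // LinearIndependent F b'} := fun p =>
      ⟨fun i => ⟨p.1.1.1 i, by
          have hw : w.1 = fun j => ∑ i, p.1.2.1 j i • p.1.1.1 i :=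
            (congrArg Subtype.val p.2).symm
          rw [hWdef, hw, span_comb _ _ p.1.2.2]
          exact Submodule.subset_span (Set.mem_range_self i)⟩,
        LinearIndependent.of_comp W.subtype (by exact p.1.1.2)⟩
    have hfinj : Function.Injective f := by
      rintro ⟨⟨⟨b, hb⟩, ⟨c, hc⟩⟩, hp⟩ ⟨⟨⟨b2, hb2⟩, ⟨c2, hc2⟩⟩, hp2⟩ h
      have hbb : b = b2 := by
        funext i
        exact congrArg Subtype.val (congrFun (congrArg Subtype.val h) i)
      subst hbb
      have hcc : c = c2 := by
        funext j
        have e1 : ∑ i, c j i • b i = w.1 j := congrFun (congrArg Subtype.val hp) j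
        have e2 : ∑ i, c2 j i • b i = w.1 j := congrFun (congrArg Subtype.val hp2) j
        have e3 : ∑ i, (c j i - c2 j i) • b i = 0 := by
          simp only [sub_smul, Finset.sum_sub_distrib, e1, e2, sub_self]
        funext i
        have := Fintype.linearIndependent_iff.mp hb _ e3 i
        exact sub_eq_zero.mp this
      subst hcc
      rfl
    have hfsurj : Function.Surjective f := by
      rintro ⟨b', hb'⟩
      have htop : ⊤ ≤ Submodule.span F (Set.range b') :=
        (hb'.span_eq_top_of_card_eq_finrank' (by simpa using hW.symm)).ge
      set B : Basis (Fin r) F W := Basis.mk hb' htop with hB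
      have hmem : ∀ j, w.1 j ∈ W := fun j => Submodule.subset_span (Set.mem_range_self j)
      set w' : Fin ℓ → W := fun j => ⟨w.1 j, hmem j⟩ with hw'
      have hw'top : Submodule.span F (Set.range w') = ⊤ := by
        apply Submodule.map_injective_of_injective W.injective_subtype
        rw [Submodule.map_span, Submodule.map_top, Submodule.range_subtype, ← Set.range_comp]
        exact hWdef.symm
      set c : Fin ℓ → (Fin r → F) := fun j => B.equivFun (w' j) with hc'
      have hctop : Submodule.span F (Set.range c) = ⊤ := by
        have hcomp : c = ⇑(B.equivFun.toLinearMap) ∘ w' := rfl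
        rw [hcomp, Set.range_comp, Submodule.span_image, hw'top, Submodule.map_top,
          LinearEquiv.range]
      have hb2 : LinearIndependent F (fun i => ((b' i : K))) :=
        hb'.map' W.subtype (Submodule.ker_subtype W)
      have hΦ : Φ ⟨⟨fun i => (b' i : K), hb2⟩, ⟨c, hctop⟩⟩ = w := by
        apply Subtype.ext
        funext j
        show ∑ i, c j i • (b' i : K) = w.1 j
        have h2 := congrArg Subtype.val (B.sum_equivFun (w' j))
        simpa [hB, Basis.coe_mk, hw', hc'] using h2
      refine ⟨⟨⟨⟨fun i => (b' i : K), hb2⟩, ⟨c, hctop⟩⟩, hΦ⟩, ?_⟩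
      apply Subtype.ext
      funext i
      exact Subtype.ext rfl
    rw [Nat.card_congr (Equiv.ofBijective f ⟨hfinj, hfsurj⟩),
      card_linearIndependent (le_of_eq hW.symm)]
    rw [hW, Fin.prod_univ_eq_prod_range (fun i => Fintype.card F ^ r - Fintype.card F ^ i)]
  have hPcard : Nat.card P = Nat.card T *
      ∏ i ∈ Finset.range r, (Fintype.card F ^ r - Fintype.card F ^ i) :=
    nat_card_fiber_const Φ _ fib
  have hPcard2 : Nat.card P =
      (∏ i ∈ Finset.range r, (Fintype.card F ^ Module.finrank F K - Fintype.card F ^ i)) *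
      ∏ i ∈ Finset.range r, (Fintype.card F ^ ℓ - Fintype.card F ^ i) := by
    rw [hP, Nat.card_prod, card_linearIndependent hrm, card_spanning F ℓ r hrl,
      Fin.prod_univ_eq_prod_range
        (fun i => Fintype.card F ^ Module.finrank F K - Fintype.card F ^ i)]
  rw [← hPcard, hPcard2, mul_comm]

set_option maxHeartbeats 2000000 in
/-- Counting vectors of `K^n` of rank weight `r` whose last `n - t` coordinates
already have rank weight `r`:
`|{v : w(v) = r ∧ w(v₂) = r}| · ∏_{i<r} (q^r - q^i)
  = q^{rt} · ∏_{i<r} (q^{n-t} - q^i)(q^m - q^i)`. -/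
theorem card_full_support_on_tail (F K : Type*) [Field F] [Fintype F]
    [Field K] [Fintype K] [Algebra F K]
    (q m n t r : ℕ) (hq : q = Fintype.card F) (hm : m = Module.finrank F K)
    (ht : t ≤ n) (hr : r ≤ min m (n - t)) :
    Nat.card {v : Fin n → K //
        Module.finrank F (Submodule.span F (Set.range v)) = r ∧
        Module.finrank F (Submodule.span F (Set.range
          (fun j : Fin (n - t) =>
            v ⟨t + (j : ℕ), by have := j.isLt; omega⟩))) = r} *
      ∏ i ∈ Finset.range r, (q ^ r - q ^ i) =
    q ^ (r * t) *
      ∏ i ∈ Finset.range r, ((q ^ (n - t) - q ^ i) * (q ^ m - q ^ i)) := by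
  classical
  subst hq hm
  have hrm : r ≤ Module.finrank F K := le_trans hr (min_le_left _ _)
  have hrl : r ≤ n - t := le_trans hr (min_le_right _ _)
  set T := {w : Fin (n - t) → K //
    Module.finrank F (Submodule.span F (Set.range w)) = r} with hT
  set S := {v : Fin n → K //
        Module.finrank F (Submodule.span F (Set.range v)) = r ∧
        Module.finrank F (Submodule.span F (Set.range
          (fun j : Fin (n - t) =>
            v ⟨t + (j : ℕ), by have := j.isLt; omega⟩))) = r} with hS
  let Ψ : S → T := fun v => ⟨fun j : Fin (n - t) =>
    v.1 ⟨t + (j : ℕ), by have := j.isLt; omega⟩, v.2.2⟩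
  have fib : ∀ w : T, Nat.card {v : S // Ψ v = w} = Fintype.card F ^ (r * t) := by
    intro w
    set W := Submodule.span F (Set.range w.1) with hWdef
    have hW : Module.finrank F W = r := w.2
    let g : {v : S // Ψ v = w} → (Fin t → W) := fun v => fun i =>
      ⟨v.1.1 ⟨(i : ℕ), lt_of_lt_of_le i.2 ht⟩, by
        have htail : (fun j : Fin (n - t) =>
            v.1.1 ⟨t + (j : ℕ), by have := j.isLt; omega⟩) = w.1 :=
          congrArg Subtype.val v.2
        have hle : Submodule.span F (Set.range (fun j : Fin (n - t) =>
            v.1.1 ⟨t + (j : ℕ), by have := j.isLt; omega⟩)) ≤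
            Submodule.span F (Set.range v.1.1) := by
          apply Submodule.span_mono
          rintro x ⟨j, rfl⟩
          exact ⟨_, rfl⟩
        have heq : Submodule.span F (Set.range (fun j : Fin (n - t) =>
            v.1.1 ⟨t + (j : ℕ), by have := j.isLt; omega⟩)) =
            Submodule.span F (Set.range v.1.1) :=
          Submodule.eq_of_le_of_finrank_le hle (by rw [v.1.2.1, v.1.2.2])
        rw [hWdef, ← htail, heq]
        exact Submodule.subset_span ⟨_, rfl⟩⟩
    have hginj : Function.Injective g := by
      rintro ⟨⟨v, hv⟩, hp⟩ ⟨⟨v2, hv2⟩, hp2⟩ h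
      have htail : (fun j : Fin (n - t) =>
          v ⟨t + (j : ℕ), by have := j.isLt; omega⟩) = w.1 := congrArg Subtype.val hp
      have htail2 : (fun j : Fin (n - t) =>
          v2 ⟨t + (j : ℕ), by have := j.isLt; omega⟩) = w.1 := congrArg Subtype.val hp2
      apply Subtype.ext
      apply Subtype.ext
      funext j
      show v j = v2 j
      by_cases hj : (j : ℕ) < t
      · have := congrArg Subtype.val (congrFun h ⟨(j : ℕ), hj⟩)
        simpa [g, Fin.eta] using this
      · have hj' : j = (⟨t + ((j : ℕ) - t), by have := j.isLt; omega⟩ : Fin n) := by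
          apply Fin.ext
          show (j : ℕ) = t + ((j : ℕ) - t)
          omega
        rw [hj']
        exact (congrFun htail ⟨(j : ℕ) - t, by have := j.isLt; omega⟩).trans
          (congrFun htail2 ⟨(j : ℕ) - t, by have := j.isLt; omega⟩).symm
    have hgsurj : Function.Surjective g := by
      intro u
      set v : Fin n → K := fun j => if h : (j : ℕ) < t then (u ⟨(j : ℕ), h⟩ : K)
        else w.1 ⟨(j : ℕ) - t, by have := j.isLt; omega⟩ with hv
      have htail : (fun j : Fin (n - t) =>
          v ⟨t + (j : ℕ), by have := j.isLt; omega⟩) = w.1 := by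
        funext j
        rw [hv]
        simp only []
        rw [dif_neg (by omega)]
        exact congrArg w.1 (Fin.ext (by simp))
      have hspan : Submodule.span F (Set.range v) = W := by
        apply le_antisymm
        · rw [Submodule.span_le]
          rintro x ⟨j, rfl⟩
          by_cases hj : (j : ℕ) < t
          · rw [hv]
            simp only [dif_pos hj]
            exact (u ⟨(j : ℕ), hj⟩).2
          · rw [hv]
            simp only [dif_neg hj]
            exact Submodule.subset_span ⟨_, rfl⟩
        · rw [hWdef, Submodule.span_le]
          rintro x ⟨j, rfl⟩
          apply Submodule.subset_span
          exact ⟨⟨t + (j : ℕ), by have := j.isLt; omega⟩, congrFun htail j⟩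
      have hv1 : Module.finrank F (Submodule.span F (Set.range v)) = r := by
        rw [hspan]; exact hW
      have hv2 : Module.finrank F (Submodule.span F (Set.range
          (fun j : Fin (n - t) =>
            v ⟨t + (j : ℕ), by have := j.isLt; omega⟩))) = r := by
        rw [htail]; exact hW
      refine ⟨⟨⟨v, hv1, hv2⟩, Subtype.ext htail⟩, ?_⟩
      funext i
      apply Subtype.ext
      show v ⟨(i : ℕ), lt_of_lt_of_le i.2 ht⟩ = (u i : K)
      rw [hv]
      simp only [dif_pos i.2, Fin.eta]
    rw [Nat.card_congr (Equiv.ofBijective g ⟨hginj, hgsurj⟩)]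
    letI := Fintype.ofFinite W
    rw [Nat.card_fun, Nat.card_eq_fintype_card (α := W), card_eq_pow_finrank (K := F) (V := W),
      hW, Nat.card_eq_fintype_card (α := Fin t), Fintype.card_fin, ← pow_mul]
  have hScard : Nat.card S = Nat.card T * Fintype.card F ^ (r * t) :=
    nat_card_fiber_const Ψ _ fib
  have hTcard := tail_count F K (n - t) r hrm hrl
  rw [← hT] at hTcard
  have hre : Nat.card T * (Fintype.card F ^ (r * t) *
      ∏ i ∈ Finset.range r, (Fintype.card F ^ r - Fintype.card F ^ i)) =
      (Nat.card T * ∏ i ∈ Finset.range r, (Fintype.card F ^ r - Fintype.card F ^ i)) *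
        Fintype.card F ^ (r * t) := by ring
  rw [hScard, mul_assoc, hre, hTcard, Finset.prod_mul_distrib]
  ring
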